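/- In the SDL protocol, at most the first message delivered to the receiving application can be reordered: for all i < j with i ≥ 2, the i-th delivered message was submitted by the sending application no later than the j-th delivered message. -/
import Mathlib

lemma sdl_aux (sendStart sendEnd : ℕ → ℕ)
    (hseq : ∀ k, sendEnd k ≤ sendStart (k + 1))
    (hdur : ∀ k, sendStart k ≤ sendEnd k) :
    ∀ a b, a < b → sendEnd a ≤ sendStart b := by
  intro a b hab
  induction b with
  | zero => omega
  | succ n ih =>
    rcases Nat.lt_succ_iff_lt_or_eq.mp hab with h | h
    · exact le_trans (le_trans (ih h) (hdur n)) (hseq n)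
    · subst h; exact hseq a

/-- SDL: at most the first delivered message can be reordered.  `Send` calls
are blocking, so the sender's invocations are sequential:
`sendEnd k ≤ sendStart (k+1)` and `sendStart k ≤ sendEnd k`.  For every
delivery index `i ≥ 2` (1-indexed), the delivery occurs during the `Send`
invocation `phase i` of its message, and deliveries happen in strictly
increasing time order at the receiver.  Hence for all `2 ≤ i < j`, the `i`-th
delivered message was submitted no later than the `j`-th delivered message:
`phase i ≤ phase j`. -/
theorem sdl_at_most_one_reorder (sendStart sendEnd deliverTime : ℕ → ℕ)
    (phase : ℕ → ℕ)
    (hseq : ∀ k, sendEnd k ≤ sendStart (k + 1))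
    (hdur : ∀ k, sendStart k ≤ sendEnd k)
    (hwithin : ∀ i, 2 ≤ i →
      sendStart (phase i) ≤ deliverTime i ∧ deliverTime i ≤ sendEnd (phase i))
    (horder : ∀ i j, i < j → deliverTime i < deliverTime j) :
    ∀ i j, 2 ≤ i → i < j → phase i ≤ phase j := by
  intro i j hi hij
  by_contra h
  push_neg at h
  have hj : 2 ≤ j := by omega
  have h1 := (hwithin i hi).1
  have h2 := (hwithin j hj).2
  have h3 := sdl_aux sendStart sendEnd hseq hdur _ _ h
  have h4 := horder i j hij
  omega
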